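/- Let a < b, σ > 0 with σ ≤ (b−a)/2, let z = χ_{[a,b]}, and let φ̂_σ be the hat kernel. Then ∫_ℝ (φ̂_σ * z)² = (b − a) − (7/15)σ. -/

import Mathlib

open MeasureTheory Set

noncomputable section

/-- The total variation `∫_ℝ |u'|` of a function `u : ℝ → ℝ`. -/
def TV (u : ℝ → ℝ) : ENNReal := eVariationOn u Set.univ

/-- Convolution `(φ * u)(x) = ∫_ℝ φ(x − y) u(y) dy`. -/
def conv (φ u : ℝ → ℝ) : ℝ → ℝ := fun x => ∫ y : ℝ, φ (x - y) * u y

/-- Membership of `φ` in the kernel class `𝒦`, with parameter `σ` and profile `p`: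
`φ(x) = p(|x|) χ_{[−σ,σ]}(x)` with `p ≥ 0` monotonically decreasing on `[0,σ]`
and `∫₀^σ p = 1/2`; in particular `φ ∈ L¹(ℝ)`. -/
def IsKernelWith (φ : ℝ → ℝ) (p : ℝ → ℝ) (σ : ℝ) : Prop :=
  0 < σ ∧ Integrable φ ∧
    (∀ x ∈ Icc (0:ℝ) σ, 0 ≤ p x) ∧ AntitoneOn p (Icc (0:ℝ) σ) ∧
    (∫ x in (0:ℝ)..σ, p x) = 1 / 2 ∧
    ∀ x : ℝ, φ x = if |x| ≤ σ then p |x| else 0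

/-- The hat kernel `φ̂_σ(x) = (1 − |x|/σ)/σ` for `|x| < σ`, `0` otherwise. -/
def hatKernel (σ : ℝ) : ℝ → ℝ := fun x => if |x| < σ then (1 - |x| / σ) / σ else 0

/-- The dual norm `‖f‖_* = sup { |∫ f v| : v ∈ L¹(ℝ), ∫_ℝ |v'| ≤ 1 }`. -/
def starNorm (f : ℝ → ℝ) : ENNReal :=
  ⨆ (v : ℝ → ℝ) (_ : Integrable v ∧ TV v ≤ 1), ENNReal.ofReal |∫ x : ℝ, f x * v x|

/-- Structural description of a bar code: `n` bars with interface points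
`t 0 < t 1 < ⋯ < t (2n−1)` inside `[0,1]`; the bars are the intervals
`[t (2k), t (2k+1)]`, `k < n`. -/
structure BarcodeRep where
  n : ℕ
  t : ℕ → ℝ
  mono : StrictMonoOn t (Set.Iio (2 * n))
  left : n ≠ 0 → 0 ≤ t 0
  right : n ≠ 0 → t (2 * n - 1) ≤ 1

/-- The support of a bar code: the union of its (closed) bars. -/
def BarcodeRep.supp (B : BarcodeRep) : Set ℝ :=
  ⋃ k ∈ Finset.range B.n, Icc (B.t (2 * k)) (B.t (2 * k + 1))

/-- The bar code as a function: the characteristic function of the union of its bars. -/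
def BarcodeRep.fn (B : BarcodeRep) : ℝ → ℝ := B.supp.indicator fun _ => (1:ℝ)

/-- `x` is an interface location (an endpoint of a bar) of the bar code `B`. -/
def BarcodeRep.IsInterface (B : BarcodeRep) (x : ℝ) : Prop := ∃ k < 2 * B.n, B.t k = x

/-- All bars and all (maximal, nonempty) spaces in `[0,1]` of the bar code `B`
have width at least `ω`. -/
def BarcodeRep.MinWidth (B : BarcodeRep) (ω : ℝ) : Prop :=
  (∀ k < B.n, ω ≤ B.t (2 * k + 1) - B.t (2 * k)) ∧
  (∀ k, k + 1 < B.n → ω ≤ B.t (2 * k + 2) - B.t (2 * k + 1)) ∧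
  (B.n ≠ 0 → 0 < B.t 0 → ω ≤ B.t 0) ∧
  (B.n ≠ 0 → B.t (2 * B.n - 1) < 1 → ω ≤ 1 - B.t (2 * B.n - 1))

/-- Membership in `ℬ`: `u` is (the standard representative of) a bar code. -/
def IsBarcode (u : ℝ → ℝ) : Prop := ∃ B : BarcodeRep, u = B.fn

/-- Membership in `ℬ_ω`. -/
def IsBarcodeW (u : ℝ → ℝ) (ω : ℝ) : Prop := ∃ B : BarcodeRep, u = B.fn ∧ B.MinWidth ω

/-- Membership in `ℬ^{ij}`: `u = i` on `[0,x₁]` and `u = j` on `[x₂,1]` for some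
`0 < x₁ ≤ x₂ < 1`. -/
def InBij (u : ℝ → ℝ) (i j : ℝ) : Prop :=
  ∃ x₁ x₂ : ℝ, 0 < x₁ ∧ x₁ ≤ x₂ ∧ x₂ < 1 ∧
    (∀ x ∈ Icc (0:ℝ) x₁, u x = i) ∧ (∀ x ∈ Icc x₂ (1:ℝ), u x = j)

/-- The `L²` fidelity term `‖g − f‖²_{L²(ℝ)}`, valued in `[0,∞]`
(equal to `∞` if `g − f ∉ L²(ℝ)`). -/
def fidelity (g f : ℝ → ℝ) : ENNReal := ∫⁻ x : ℝ, ENNReal.ofReal ((g x - f x) ^ 2)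

/-- The functional `F₁(u) = ∫_ℝ |u'| + λ ‖u − f‖²_{L²(ℝ)}`. -/
def F1 (lam : ℝ) (f u : ℝ → ℝ) : ENNReal := TV u + ENNReal.ofReal lam * fidelity u f

/-- The (blind) deconvolution functional `F(u) = ∫_ℝ |u'| + λ ‖φ*u − f‖²_{L²(ℝ)}`
(this is `F₂` when `φ = φ_σ` and `F₃` when `φ = φ_ρ`). -/
def Fker (lam : ℝ) (φ f u : ℝ → ℝ) : ENNReal :=
  TV u + ENNReal.ofReal lam * fidelity (conv φ u) f

/-- Square of the positive part, differentiable everywhere. -/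
lemma maxsq_hasDeriv (t : ℝ) : HasDerivAt (fun x : ℝ => max 0 x ^ 2) (2 * max 0 t) t := by
  rcases lt_trichotomy t 0 with ht | rfl | ht
  · have : (fun x : ℝ => max 0 x ^ 2) =ᶠ[nhds t] fun _ => (0:ℝ) := by
      filter_upwards [Iio_mem_nhds ht] with x hx
      simp [max_eq_left (le_of_lt (mem_Iio.mp hx))]
    have h0 : HasDerivAt (fun _ : ℝ => (0:ℝ)) 0 t := hasDerivAt_const t 0
    have := h0.congr_of_eventuallyEq this
    simpa [max_eq_left ht.le] using this
  · rw [hasDerivAt_iff_isLittleO]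
    simp only [max_self, ne_eq, OfNat.ofNat_ne_zero, not_false_eq_true, zero_pow, mul_zero,
      sub_zero, smul_eq_mul, max_eq_left le_rfl]
    rw [Asymptotics.isLittleO_iff]
    intro c hc
    filter_upwards [Metric.ball_mem_nhds (0:ℝ) hc] with x hx
    have hx' : |x| < c := by simpa [Real.dist_eq] using hx
    have h1 : max 0 x ^ 2 ≤ x ^ 2 := by
      rcases le_total x 0 with h | h
      · simp [max_eq_left h]; positivity
      · simp [max_eq_right h]
    have : ‖max 0 x ^ 2‖ ≤ x ^ 2 := by
      rw [Real.norm_eq_abs, abs_of_nonneg (by positivity)]; exact h1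
    refine this.trans ?_
    rw [Real.norm_eq_abs, ← sq_abs, sq]
    exact mul_le_mul_of_nonneg_right hx'.le (abs_nonneg x)
  · have : (fun x : ℝ => max 0 x ^ 2) =ᶠ[nhds t] fun x => x ^ 2 := by
      filter_upwards [Ioi_mem_nhds ht] with x hx
      simp [max_eq_right (le_of_lt (mem_Ioi.mp hx))]
    have := (hasDerivAt_pow 2 t).congr_of_eventuallyEq this
    simpa [max_eq_right ht.le, mul_comm] using this

/-- An antiderivative of the hat kernel. -/
def Phi (σ : ℝ) : ℝ → ℝ := fun t =>
  ((max 0 (t + σ)) ^ 2 - 2 * (max 0 t) ^ 2 + (max 0 (t - σ)) ^ 2) / (2 * σ ^ 2)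

lemma Phi_hasDeriv {σ : ℝ} (hσ : 0 < σ) (t : ℝ) :
    HasDerivAt (Phi σ) (hatKernel σ t) t := by
  have h1 : HasDerivAt (fun x : ℝ => max 0 (x + σ) ^ 2) (2 * max 0 (t + σ)) t := by
    exact ((maxsq_hasDeriv (t + σ)).comp t ((hasDerivAt_id t).add_const σ)).congr_deriv (show _ = 2 * max 0 (t + σ) by ring)
  have h2 := maxsq_hasDeriv t
  have h3 : HasDerivAt (fun x : ℝ => max 0 (x - σ) ^ 2) (2 * max 0 (t - σ)) t := by
    exact ((maxsq_hasDeriv (t - σ)).comp t ((hasDerivAt_id t).sub_const σ)).congr_deriv (show _ = 2 * max 0 (t - σ) by ring)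
  have H : HasDerivAt (Phi σ)
      ((2 * max 0 (t + σ) - 2 * (2 * max 0 t) + 2 * max 0 (t - σ)) / (2 * σ ^ 2)) t :=
    ((h1.sub (h2.const_mul 2)).add h3).div_const _
  convert H using 1
  have hσ' : σ ≠ 0 := ne_of_gt hσ
  unfold hatKernel
  rcases le_or_gt (t + σ) 0 with h | h
  · rw [max_eq_left h, max_eq_left (by linarith), max_eq_left (by linarith),
      if_neg (by push_neg; rw [abs_of_nonpos (by linarith)]; linarith)]
    ring
  · rcases le_or_gt t 0 with h0 | h0
    · rw [max_eq_right h.le, max_eq_left h0, max_eq_left (by linarith),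
        if_pos (by rw [abs_lt]; constructor <;> linarith), abs_of_nonpos h0]
      field_simp; ring
    · rcases lt_or_ge t σ with hs | hs
      · rw [max_eq_right h.le, max_eq_right h0.le, max_eq_left (by linarith),
          if_pos (by rw [abs_lt]; constructor <;> linarith), abs_of_pos h0]
        field_simp; ring
      · rw [max_eq_right h.le, max_eq_right h0.le, max_eq_right (by linarith),
          if_neg (by rw [abs_lt]; push_neg; intro; linarith)]
        ring

lemma Phi_of_le {σ : ℝ} (hσ : 0 < σ) (t : ℝ) (ht : t ≤ -σ) : Phi σ t = 0 := by
  unfold Phi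
  rw [max_eq_left (by linarith), max_eq_left (by linarith), max_eq_left (by linarith)]
  ring

lemma Phi_of_ge {σ : ℝ} (hσ : 0 < σ) (t : ℝ) (ht : σ ≤ t) : Phi σ t = 1 := by
  unfold Phi
  rw [max_eq_right (by linarith), max_eq_right (by linarith), max_eq_right (by linarith)]
  field_simp; ring

lemma hatKernel_cont {σ : ℝ} (hσ : 0 < σ) : Continuous (hatKernel σ) := by
  have : hatKernel σ = fun x => max 0 (1 - |x| / σ) / σ := by
    funext x
    unfold hatKernel
    rcases lt_or_ge (|x|) σ with h | h
    · rw [if_pos h, max_eq_right]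
      have : |x| / σ < 1 := (div_lt_one hσ).2 h
      linarith
    · rw [if_neg (not_lt.2 h), max_eq_left, zero_div]
      have : (1:ℝ) ≤ |x| / σ := (one_le_div hσ).2 h
      linarith
  rw [this]
  fun_prop

/-- Lemma 12: for `a < b`, `0 < σ ≤ (b−a)/2` and
`z = χ_{[a,b]}`, one has `∫_ℝ (φ̂_σ * z)² = (b − a) − (7/15)σ`. -/
theorem statement18 (a b σ : ℝ) (hab : a < b) (hσ : 0 < σ) (hσ2 : σ ≤ (b - a) / 2) :
    ∫ x : ℝ, (conv (hatKernel σ) ((Icc a b).indicator fun _ => (1:ℝ)) x)^2 =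
      (b - a) - 7 / 15 * σ := by
  have hσ' : σ ≠ 0 := ne_of_gt hσ
  have hba : a + 2 * σ ≤ b := by linarith
  -- Step 1: the convolution equals `Phi σ (x - a) - Phi σ (x - b)`.
  have hconv : ∀ x : ℝ,
      conv (hatKernel σ) ((Icc a b).indicator fun _ => (1:ℝ)) x =
        Phi σ (x - a) - Phi σ (x - b) := by
    intro x
    have h1 : (fun y => hatKernel σ (x - y) * (Icc a b).indicator (fun _ => (1:ℝ)) y) =
        (Icc a b).indicator (fun y => hatKernel σ (x - y)) := by
      funext y
      by_cases hy : y ∈ Icc a b <;> simp [hy]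
    rw [conv, h1, MeasureTheory.integral_indicator measurableSet_Icc,
      MeasureTheory.integral_Icc_eq_integral_Ioc,
      ← intervalIntegral.integral_of_le hab.le,
      intervalIntegral.integral_comp_sub_left (hatKernel σ) x]
    exact intervalIntegral.integral_eq_sub_of_hasDerivAt
      (fun t _ => Phi_hasDeriv hσ t)
      ((hatKernel_cont hσ).intervalIntegrable _ _)
  set F : ℝ → ℝ := fun x => (Phi σ (x - a) - Phi σ (x - b)) ^ 2 with hF
  have hFeq : (fun x => (conv (hatKernel σ) ((Icc a b).indicator fun _ => (1:ℝ)) x) ^ 2) = F := by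
    funext x; rw [hconv x]
  rw [show (∫ x : ℝ, (conv (hatKernel σ) ((Icc a b).indicator fun _ => (1:ℝ)) x) ^ 2) =
      ∫ x : ℝ, F x from by rw [hFeq]]
  -- Step 2: reduce to an interval integral.
  have hsupp : Function.support F ⊆ Ioc (a - σ) (b + σ) := by
    intro x hx
    by_contra hxmem
    apply hx
    rw [mem_Ioc, not_and_or] at hxmem
    rcases hxmem with h | h
    · push_neg at h
      rw [hF]
      simp only
      rw [Phi_of_le hσ (x - a) (by linarith), Phi_of_le hσ (x - b) (by linarith)]
      ring
    · push_neg at h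
      rw [hF]
      simp only
      rw [Phi_of_ge hσ (x - a) (by linarith), Phi_of_ge hσ (x - b) (by linarith)]
      ring
  rw [← intervalIntegral.integral_eq_integral_of_support_subset hsupp]
  -- Step 3: split into five pieces.
  have hFcont : Continuous F := by
    apply Continuous.pow
    apply Continuous.sub <;>
    · apply Continuous.div_const
      fun_prop
  have hInt : ∀ c d : ℝ, IntervalIntegrable F volume c d :=
    fun c d => hFcont.intervalIntegrable c d
  rw [← intervalIntegral.integral_add_adjacent_intervals (hInt (a - σ) a) (hInt a (b + σ)),
    ← intervalIntegral.integral_add_adjacent_intervals (hInt a (a + σ)) (hInt (a + σ) (b + σ)),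
    ← intervalIntegral.integral_add_adjacent_intervals (hInt (a + σ) (b - σ)) (hInt (b - σ) (b + σ)),
    ← intervalIntegral.integral_add_adjacent_intervals (hInt (b - σ) b) (hInt b (b + σ))]
  -- Piece 1
  have I1 : ∫ x in (a - σ)..a, F x = σ / 20 := by
    rw [intervalIntegral.integral_eq_sub_of_hasDerivAt
      (f := fun x => (x - a + σ) ^ 5 / (20 * σ ^ 4)) (f' := F) ?_
      (hInt _ _)]
    · field_simp; ring
    · intro x hx
      rw [uIcc_of_le (by linarith)] at hx
      obtain ⟨hx1, hx2⟩ := hx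
      have hD : HasDerivAt (fun x : ℝ => (x - a + σ) ^ 5 / (20 * σ ^ 4))
          ((5:ℕ) * (x - a + σ) ^ 4 * 1 / (20 * σ ^ 4)) x :=
        ((((hasDerivAt_id x).sub_const a).add_const σ).pow 5).div_const _
      refine hD.congr_deriv ?_
      rw [hF]
      simp only
      rw [Phi_of_le hσ (x - b) (by linarith)]
      unfold Phi
      rw [max_eq_right (by linarith), max_eq_left (by linarith), max_eq_left (by linarith)]
      field_simp; ring
  -- Piece 2
  have I2 : ∫ x in a..(a + σ), F x = 43 / 60 * σ := by
    rw [intervalIntegral.integral_eq_sub_of_hasDerivAt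
      (f := fun x => (σ ^ 4 * (x - a) + 2 * σ ^ 3 * (x - a) ^ 2 + 2 / 3 * σ ^ 2 * (x - a) ^ 3
        - σ * (x - a) ^ 4 + (x - a) ^ 5 / 5) / (4 * σ ^ 4)) (f' := F) ?_
      (hInt _ _)]
    · field_simp; ring
    · intro x hx
      rw [uIcc_of_le (by linarith)] at hx
      obtain ⟨hx1, hx2⟩ := hx
      have hs : HasDerivAt (fun x : ℝ => x - a) 1 x := (hasDerivAt_id x).sub_const a
      have hD := (((((hs.const_mul (σ ^ 4)).add ((hs.pow 2).const_mul (2 * σ ^ 3))).add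
        ((hs.pow 3).const_mul (2 / 3 * σ ^ 2))).sub ((hs.pow 4).const_mul σ)).add
        ((hs.pow 5).div_const 5)).div_const (4 * σ ^ 4)
      refine hD.congr_deriv ?_
      rw [hF]
      simp only
      rw [Phi_of_le hσ (x - b) (by linarith)]
      unfold Phi
      rw [max_eq_right (by linarith), max_eq_right (by linarith), max_eq_left (by linarith)]
      field_simp; ring
  -- Piece 3
  have I3 : ∫ x in (a + σ)..(b - σ), F x = b - a - 2 * σ := by
    rw [intervalIntegral.integral_eq_sub_of_hasDerivAt
      (f := fun x => x) (f' := F) ?_ (hInt _ _)]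
    · ring
    · intro x hx
      rw [uIcc_of_le (by linarith)] at hx
      obtain ⟨hx1, hx2⟩ := hx
      have hD : HasDerivAt (fun x : ℝ => x) 1 x := hasDerivAt_id x
      refine hD.congr_deriv ?_
      rw [hF]
      simp only
      rw [Phi_of_ge hσ (x - a) (by linarith), Phi_of_le hσ (x - b) (by linarith)]
      ring
  -- Piece 4
  have I4 : ∫ x in (b - σ)..b, F x = 43 / 60 * σ := by
    rw [intervalIntegral.integral_eq_sub_of_hasDerivAt
      (f := fun x => (x - b + σ) - (x - b + σ) ^ 3 / (3 * σ ^ 2)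
        + (x - b + σ) ^ 5 / (20 * σ ^ 4)) (f' := F) ?_ (hInt _ _)]
    · field_simp; ring
    · intro x hx
      rw [uIcc_of_le (by linarith)] at hx
      obtain ⟨hx1, hx2⟩ := hx
      have hs : HasDerivAt (fun x : ℝ => x - b + σ) 1 x :=
        ((hasDerivAt_id x).sub_const b).add_const σ
      have hD := (hs.sub ((hs.pow 3).div_const (3 * σ ^ 2))).add ((hs.pow 5).div_const (20 * σ ^ 4))
      refine hD.congr_deriv ?_
      rw [hF]
      simp only
      rw [Phi_of_ge hσ (x - a) (by linarith)]
      unfold Phi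
      rw [max_eq_right (by linarith), max_eq_left (by linarith), max_eq_left (by linarith)]
      field_simp; ring
  -- Piece 5
  have I5 : ∫ x in b..(b + σ), F x = σ / 20 := by
    rw [intervalIntegral.integral_eq_sub_of_hasDerivAt
      (f := fun x => (x - b - σ) ^ 5 / (20 * σ ^ 4)) (f' := F) ?_ (hInt _ _)]
    · field_simp; ring
    · intro x hx
      rw [uIcc_of_le (by linarith)] at hx
      obtain ⟨hx1, hx2⟩ := hx
      have hD : HasDerivAt (fun x : ℝ => (x - b - σ) ^ 5 / (20 * σ ^ 4))
          ((5:ℕ) * (x - b - σ) ^ 4 * 1 / (20 * σ ^ 4)) x :=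
        ((((hasDerivAt_id x).sub_const b).sub_const σ).pow 5).div_const _
      refine hD.congr_deriv ?_
      rw [hF]
      simp only
      rw [Phi_of_ge hσ (x - a) (by linarith)]
      unfold Phi
      rw [max_eq_right (by linarith), max_eq_right (by linarith), max_eq_left (by linarith)]
      field_simp; ring
  rw [I1, I2, I3, I4, I5]
  ring

end
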